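/- Let Re > 0 be a real constant and define u(x, y, t) = 3/4 − 1/(4[1 + exp((−4x + 4y − t)·Re/32)]) and v(x, y, t) = 3/4 + 1/(4[1 + exp((−4x + 4y − t)·Re/32)]). Then u satisfies the first equation of the two-dimensional Burgers system, ∂_t u + u·∂_x u + v·∂_y u = (1/Re)(∂²_x u + ∂²_y u), at every point (x, y, t) ∈ R² × R. -/

import Mathlib

/-!
The solution is a travelling wave: `u = 3/4 - φ w` and `v = 3/4 + φ w` in the phase
`w = (-4x + 4y - t) Re / 32`, where `φ w = 1 / (4 (1 + exp w))` is a rescaled sigmoid and hence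
solves the Riccati equation `φ' = 4 φ² - φ`. Every partial derivative of `u` is therefore a
polynomial in `φ w` times a power of the phase speed, and both sides of the equation reduce to
`(Re / 32) (8 φ - 1) (φ - 4 φ²)`.
-/

open Real

section ChainRule

variable {𝕜 : Type*} [NontriviallyNormedField 𝕜] {F F' F'' g : 𝕜 → 𝕜} {a : 𝕜}

theorem deriv_comp_eq_of_hasDerivAt (hF : ∀ w, HasDerivAt F (F' w) w)
    (hg : ∀ s, HasDerivAt g a s) :
    deriv (fun s => F (g s)) = fun s => F' (g s) * a :=
  funext fun s => ((hF (g s)).comp s (hg s)).deriv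

theorem deriv_deriv_comp_eq_of_hasDerivAt (hF : ∀ w, HasDerivAt F (F' w) w)
    (hF' : ∀ w, HasDerivAt F' (F'' w) w) (hg : ∀ s, HasDerivAt g a s) (s : 𝕜) :
    deriv (deriv fun s => F (g s)) s = F'' (g s) * a * a := by
  rw [deriv_comp_eq_of_hasDerivAt hF hg]
  exact (((hF' (g s)).comp s (hg s)).mul_const a).deriv

end ChainRule

noncomputable def burgersProfile (w : ℝ) : ℝ := 1 / (4 * (1 + exp w))

theorem burgersProfile_eq_sigmoid : burgersProfile = fun w => sigmoid (-w) / 4 := by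
  funext w
  rw [burgersProfile, sigmoid_def, neg_neg]
  field_simp

theorem hasDerivAt_burgersProfile (w : ℝ) :
    HasDerivAt burgersProfile (4 * burgersProfile w ^ 2 - burgersProfile w) w := by
  rw [burgersProfile_eq_sigmoid]
  exact (((hasDerivAt_sigmoid (-w)).comp w (hasDerivAt_neg w)).div_const 4).congr_deriv (by ring)

theorem hasDerivAt_burgersProfile_deriv (w : ℝ) :
    HasDerivAt (fun w => 4 * burgersProfile w ^ 2 - burgersProfile w)
      ((8 * burgersProfile w - 1) * (4 * burgersProfile w ^ 2 - burgersProfile w)) w :=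
  ((((hasDerivAt_burgersProfile w).pow 2).const_mul 4).sub
    (hasDerivAt_burgersProfile w)).congr_deriv (by ring)

noncomputable def burgersPhase (Re x y t : ℝ) : ℝ := (-4 * x + 4 * y - t) * Re / 32

section Phase

variable (Re x y t : ℝ)

theorem hasDerivAt_burgersPhase_x :
    HasDerivAt (fun x => burgersPhase Re x y t) (-(Re / 8)) x :=
  (((((hasDerivAt_id x).const_mul (-4)).add_const (4 * y)).sub_const t).mul_const Re
    |>.div_const 32).congr_deriv (by ring)

theorem hasDerivAt_burgersPhase_y :
    HasDerivAt (fun y => burgersPhase Re x y t) (Re / 8) y :=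
  (((((hasDerivAt_id y).const_mul 4).const_add (-4 * x)).sub_const t).mul_const Re
    |>.div_const 32).congr_deriv (by ring)

theorem hasDerivAt_burgersPhase_t :
    HasDerivAt (fun t => burgersPhase Re x y t) (-(Re / 32)) t :=
  (((hasDerivAt_id t).const_sub (-4 * x + 4 * y)).mul_const Re
    |>.div_const 32).congr_deriv (by ring)

end Phase

theorem burgers_2d_first_equation_general (Re : ℝ) :
    let u : ℝ → ℝ → ℝ → ℝ := fun x y t =>
      3 / 4 - 1 / (4 * (1 + Real.exp ((-4 * x + 4 * y - t) * Re / 32)))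
    let v : ℝ → ℝ → ℝ → ℝ := fun x y t =>
      3 / 4 + 1 / (4 * (1 + Real.exp ((-4 * x + 4 * y - t) * Re / 32)))
    ∀ x y t : ℝ,
      deriv (fun t' => u x y t') t
        + u x y t * deriv (fun x' => u x' y t) x
        + v x y t * deriv (fun y' => u x y' t) y
      = (1 / Re) * (deriv (deriv fun x' => u x' y t) x
          + deriv (deriv fun y' => u x y' t) y) := by
  intro u v x y t
  simp only [u, v, ← burgersProfile.eq_1, ← burgersPhase.eq_1]
  set φ := burgersProfile
  have hU (w : ℝ) : HasDerivAt (fun w => 3 / 4 - φ w) (-(4 * φ w ^ 2 - φ w)) w :=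
    (hasDerivAt_burgersProfile w).const_sub _
  have hU' (w : ℝ) : HasDerivAt (fun w => -(4 * φ w ^ 2 - φ w))
      (-((8 * φ w - 1) * (4 * φ w ^ 2 - φ w))) w :=
    (hasDerivAt_burgersProfile_deriv w).neg
  rw [deriv_deriv_comp_eq_of_hasDerivAt hU hU' (hasDerivAt_burgersPhase_x Re · y t),
    deriv_deriv_comp_eq_of_hasDerivAt hU hU' (hasDerivAt_burgersPhase_y Re x · t),
    deriv_comp_eq_of_hasDerivAt hU (hasDerivAt_burgersPhase_x Re · y t),
    deriv_comp_eq_of_hasDerivAt hU (hasDerivAt_burgersPhase_y Re x · t),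
    deriv_comp_eq_of_hasDerivAt hU (hasDerivAt_burgersPhase_t Re x y ·)]
  set p := φ (burgersPhase Re x y t)
  linear_combination (8 * p - 1) * (4 * p ^ 2 - p) / 32 * inv_mul_mul_self Re

/-- The exact solution `u` of the 2D Burgers system satisfies the first equation
`∂ₜu + u ∂ₓu + v ∂_y u = (1/Re)(∂ₓ²u + ∂_y²u)` at every point of `ℝ² × ℝ`. -/
theorem burgers_2d_first_equation (Re : ℝ) (hRe : 0 < Re) :
    let u : ℝ → ℝ → ℝ → ℝ := fun x y t =>
      3 / 4 - 1 / (4 * (1 + Real.exp ((-4 * x + 4 * y - t) * Re / 32)))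
    let v : ℝ → ℝ → ℝ → ℝ := fun x y t =>
      3 / 4 + 1 / (4 * (1 + Real.exp ((-4 * x + 4 * y - t) * Re / 32)))
    ∀ x y t : ℝ,
      deriv (fun t' => u x y t') t
        + u x y t * deriv (fun x' => u x' y t) x
        + v x y t * deriv (fun y' => u x y' t) y
      = (1 / Re) * (deriv (deriv fun x' => u x' y t) x
          + deriv (deriv fun y' => u x y' t) y) :=
  burgers_2d_first_equation_general Re
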